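/- An index satisfies additivity, null artists, and equal global impact of users if and only if it is an aggregate-invariant decomposable index. -/
import Mathlib


open Finset

/-- A popularity index assigns, to every streaming problem `(N, M, t)`
(artists `N`, users `M`, stream matrix `t`), a real value for each artist. -/
abbrev SIndex : Type := Finset ℕ → Finset ℕ → (ℕ → ℕ → ℕ) → ℕ → ℝ

/-- `(N, M, t)` is a streaming problem: `N` (artists) and `M` (users) are nonempty
finite sets and every user has streamed some content. -/
def IsProblem (N M : Finset ℕ) (t : ℕ → ℕ → ℕ) : Prop :=
  N.Nonempty ∧ M.Nonempty ∧ ∀ j ∈ M, 0 < ∑ i ∈ N, t i j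

/-- `I` is an index: nonnegative values with positive total, on every problem. -/
def IsIndex (I : SIndex) : Prop :=
  ∀ N M t, IsProblem N M t →
    (∀ i ∈ N, 0 ≤ I N M t i) ∧ 0 < ∑ i ∈ N, I N M t i

/-- Additivity: if `M` splits into disjoint `M₁, M₂` and `t` agrees with
`t₁` on the columns of `M₁` and with `t₂` on the columns of `M₂`, then the
index is the sum of the indices of the two subproblems. -/
def AdditiveIndex (I : SIndex) : Prop :=
  ∀ N M M₁ M₂ (t t₁ t₂ : ℕ → ℕ → ℕ),
    IsProblem N M t → IsProblem N M₁ t₁ → IsProblem N M₂ t₂ →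
    M = M₁ ∪ M₂ → Disjoint M₁ M₂ →
    (∀ i ∈ N, ∀ j ∈ M₁, t i j = t₁ i j) →
    (∀ i ∈ N, ∀ j ∈ M₂, t i j = t₂ i j) →
    ∀ i ∈ N, I N M t i = I N M₁ t₁ i + I N M₂ t₂ i

/-- Null artists: an artist with no streams gets importance zero. -/
def NullArtists (I : SIndex) : Prop :=
  ∀ N M t, IsProblem N M t → ∀ i ∈ N, (∑ j ∈ M, t i j) = 0 → I N M t i = 0

/-- Pairwise homogeneity. -/
def PairwiseHomogeneous (I : SIndex) : Prop :=
  ∀ N M t, IsProblem N M t → ∀ i ∈ N, ∀ i' ∈ N, ∀ lam : ℝ, 0 ≤ lam →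
    (∀ j ∈ M, (t i j : ℝ) = lam * (t i' j : ℝ)) →
    I N M t i = lam * I N M t i'

/-- Equal individual impact of similar users (removing either of two users with
the same streams on artist `i` has the same effect on `i`'s index). -/
def EqualIndividualImpact (I : SIndex) : Prop :=
  ∀ N M t, IsProblem N M t → 2 ≤ M.card →
    ∀ i ∈ N, ∀ j ∈ M, ∀ j' ∈ M, t i j = t i j' →
      I N (M.erase j) t i = I N (M.erase j') t i

/-- Equal global impact of users. -/
def EqualGlobalImpact (I : SIndex) : Prop :=
  ∀ N M t, IsProblem N M t → 2 ≤ M.card →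
    ∀ j ∈ M, ∀ j' ∈ M,
      ∑ i ∈ N, I N (M.erase j) t i = ∑ i ∈ N, I N (M.erase j') t i

/-- Equal impact of artists (for pairs whose removal still leaves a streaming problem). -/
def EqualArtistImpact (I : SIndex) : Prop :=
  ∀ N M t, IsProblem N M t → 2 ≤ N.card →
    ∀ i ∈ N, ∀ i' ∈ N,
      IsProblem (N.erase i) M t → IsProblem (N.erase i') M t →
      I N M t i - I (N.erase i') M t i = I N M t i' - I (N.erase i) M t i'

/-- The streaming profile of user `j`, viewed as a stream vector over `N`
(zero outside `N`). -/
def prof (N : Finset ℕ) (t : ℕ → ℕ → ℕ) (j : ℕ) : ℕ → ℕ :=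
  fun i => if i ∈ N then t i j else 0

/-- `x` is a stream vector over `N`: it vanishes outside `N`. -/
def PadVec (N : Finset ℕ) (x : ℕ → ℕ) : Prop := ∀ i, i ∉ N → x i = 0

/-- A weight system: a positive weight for each user and each stream vector over each `N`. -/
def IsWeightSystem (ω : Finset ℕ → ℕ → (ℕ → ℕ) → ℝ) : Prop :=
  ∀ N (j : ℕ) x, PadVec N x → 0 < ω N j x

/-- `I` is a weighted index. -/
def IsWeightedIndex (I : SIndex) : Prop :=
  ∃ ω, IsWeightSystem ω ∧
    ∀ N M t, IsProblem N M t → ∀ i ∈ N,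
      I N M t i = ∑ j ∈ M, ω N j (prof N t j) * (t i j : ℝ)

/-- A decomposition function `d N i j x` (artist `i`, user `j`, stream vector `x` over `N`). -/
abbrev DFun : Type := Finset ℕ → ℕ → ℕ → (ℕ → ℕ) → ℝ

/-- `d` is a genuine decomposition function: nonnegative, and zero on artists with
no streams in the vector. -/
def IsDecompFn (d : DFun) : Prop :=
  (∀ N, ∀ i ∈ N, ∀ (j : ℕ) x, PadVec N x → 0 ≤ d N i j x) ∧
  (∀ N, ∀ i ∈ N, ∀ (j : ℕ) x, PadVec N x → x i = 0 → d N i j x = 0)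

/-- `d` decomposes the index `I`. -/
def Decomposes (d : DFun) (I : SIndex) : Prop :=
  ∀ N M t, IsProblem N M t → ∀ i ∈ N,
    I N M t i = ∑ j ∈ M, d N i j (prof N t j)

/-- `I` is a decomposable index. -/
def IsDecomposable (I : SIndex) : Prop :=
  IsIndex I ∧ ∃ d, IsDecompFn d ∧ Decomposes d I

/-- A decomposition function is user independent if `d N i j x` only depends on `x i`. -/
def UserIndependent (d : DFun) : Prop :=
  ∀ N, ∀ i ∈ N, ∀ (j j' : ℕ) x x', PadVec N x → PadVec N x' →
    x i = x' i → d N i j x = d N i j' x'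

/-- A decomposition function is aggregate invariant if the total importance granted
by any (nonzero) stream vector of any user is constant. -/
def AggregateInvariant (d : DFun) : Prop :=
  ∀ N (j j' : ℕ) x x', PadVec N x → PadVec N x' →
    (∃ i ∈ N, 0 < x i) → (∃ i ∈ N, 0 < x' i) →
    ∑ i ∈ N, d N i j x = ∑ i ∈ N, d N i j' x'

/-- The Shapley value of the TU game `v` with player set `N`. -/
noncomputable def shapleyValue (N : Finset ℕ) (v : Finset ℕ → ℝ) (i : ℕ) : ℝ :=
  ∑ S ∈ (N.erase i).powerset,
    ((S.card.factorial * (N.card - S.card - 1).factorial : ℕ) : ℝ) / ((N.card.factorial : ℕ) : ℝ)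
      * (v (insert i S) - v S)

/-- The artists of `N` streamed by the vector `x`. -/
def suppOn (N : Finset ℕ) (x : ℕ → ℕ) : Finset ℕ := N.filter (fun i => 0 < x i)

/-- Restriction (with zero padding) of a stream vector to `A`. -/
def padTo (A : Finset ℕ) (x : ℕ → ℕ) : ℕ → ℕ := fun i => if i ∈ A then x i else 0

/-- `d` is Shapley induced: there is a family of TU games, coherent under restriction
to streamed artists, whose Shapley values yield `d`. -/
def ShapleyInduced (d : DFun) : Prop :=
  ∃ V : Finset ℕ → ℕ → (ℕ → ℕ) → Finset ℕ → ℝ,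
    (∀ N (j : ℕ) x, V N j x ∅ = 0) ∧
    (∀ N (j : ℕ) x, PadVec N x → ∀ S ⊆ N,
      V N j x S = V (S ∩ suppOn N x) j (padTo (S ∩ suppOn N x) x) (S ∩ suppOn N x)) ∧
    (∀ N (j : ℕ) x, PadVec N x → ∀ i ∈ N, d N i j x = shapleyValue N (V N j x) i)

/-- The pro-rata index. -/
noncomputable def proRata : SIndex := fun _N M t i => ∑ j ∈ M, (t i j : ℝ)

/-- The user-centric index. -/
noncomputable def userCentric : SIndex := fun N M t i =>
  ∑ j ∈ M, (t i j : ℝ) / (∑ i' ∈ N, (t i' j : ℝ))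

/-- The Shapley index. -/
noncomputable def shapleyIndex : SIndex := fun N M t i =>
  ∑ j ∈ M, if 0 < t i j then ((N.filter fun i' => 0 < t i' j).card : ℝ)⁻¹ else 0

/-- The equal-division index. -/
noncomputable def equalDivision : SIndex := fun N M _t _i => (M.card : ℝ) / (N.card : ℝ)


/-- Candidate decomposition: the value of artist `i` in the one-user problem with
stream vector `x` (zero if `x` vanishes on `N`). -/
noncomputable def dOf (I : SIndex) : DFun := fun N i j x =>
  if (∑ i' ∈ N, x i') = 0 then 0 else I N {j} (fun i' _ => x i') i

lemma lemA {I : SIndex} (hadd : AdditiveIndex I) (N : Finset ℕ) (j : ℕ)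
    (t s : ℕ → ℕ → ℕ) (hP : IsProblem N {j} t) (hts : ∀ i ∈ N, t i j = s i j) :
    ∀ i ∈ N, I N {j} t i = I N {j} s i := by
  intro i hi
  obtain ⟨hN, -, hcol⟩ := hP
  have hcolj : 0 < ∑ i' ∈ N, t i' j := hcol j (Finset.mem_singleton_self j)
  have hjk : j ≠ j + 1 := by omega
  set k := j + 1 with hk
  set u : ℕ → ℕ → ℕ := fun i' _ => t i' j with hu
  have hPu : IsProblem N {j, k} u := ⟨hN, ⟨j, by simp⟩, fun m _ => hcolj⟩
  have hPj : IsProblem N {j} t := ⟨hN, Finset.singleton_nonempty j, hcol⟩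
  have hPk : IsProblem N {k} u := ⟨hN, Finset.singleton_nonempty k, fun m _ => hcolj⟩
  have hPs : IsProblem N {j} s := ⟨hN, Finset.singleton_nonempty j, fun m hm => by
    rw [Finset.mem_singleton] at hm; rw [hm]
    calc (0:ℕ) < ∑ i' ∈ N, t i' j := hcolj
    _ = ∑ i' ∈ N, s i' j := Finset.sum_congr rfl fun i' hi' => hts i' hi'⟩
  have hsplit : ({j, k} : Finset ℕ) = {j} ∪ {k} := Finset.insert_eq j {k}
  have hdisj : Disjoint ({j} : Finset ℕ) {k} := by simp [hjk]
  have h1 := hadd N {j, k} {j} {k} u t u hPu hPj hPk hsplit hdisj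
    (fun i' _ m hm => by rw [Finset.mem_singleton] at hm; rw [hm])
    (fun i' _ m hm => rfl) i hi
  have h2 := hadd N {j, k} {j} {k} u s u hPu hPs hPk hsplit hdisj
    (fun i' hi' m hm => by rw [Finset.mem_singleton] at hm; rw [hm]; exact hts i' hi')
    (fun i' _ m hm => rfl) i hi
  linarith

lemma pairLemma {I : SIndex} (hadd : AdditiveIndex I) (hegi : EqualGlobalImpact I)
    (N : Finset ℕ) {j k : ℕ} (hjk : j ≠ k) (x x' : ℕ → ℕ)
    (hx : 0 < ∑ i ∈ N, x i) (hx' : 0 < ∑ i ∈ N, x' i) :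
    ∑ i ∈ N, dOf I N i j x = ∑ i ∈ N, dOf I N i k x' := by
  have hN : N.Nonempty := by
    rcases Finset.eq_empty_or_nonempty N with h | h
    · simp [h] at hx
    · exact h
  set u : ℕ → ℕ → ℕ := fun i m => if m = j then x i else x' i with hu
  have hcols : ∀ m ∈ ({j, k} : Finset ℕ), 0 < ∑ i ∈ N, u i m := by
    intro m hm
    by_cases hmj : m = j
    · simpa [hu, hmj] using hx
    · simpa [hu, hmj] using hx'
  have hPu : IsProblem N {j, k} u := ⟨hN, ⟨j, by simp⟩, hcols⟩
  have hcard : 2 ≤ ({j, k} : Finset ℕ).card := le_of_eq (Finset.card_pair hjk).symm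
  have hej : ({j, k} : Finset ℕ).erase j = {k} := by
    rw [Finset.erase_insert (by simp [hjk])]
  have hek : ({j, k} : Finset ℕ).erase k = {j} := by
    rw [Finset.erase_insert_of_ne hjk, Finset.erase_singleton]; rfl
  have hmj : j ∈ ({j, k} : Finset ℕ) := by simp
  have hmk : k ∈ ({j, k} : Finset ℕ) := by simp
  have hkey := hegi N {j, k} u hPu hcard j hmj k hmk
  rw [hej, hek] at hkey
  have hPuk : IsProblem N {k} u :=
    ⟨hN, Finset.singleton_nonempty k, fun m hm => by
      rw [Finset.mem_singleton] at hm; rw [hm]; simpa [hu, Ne.symm hjk] using hx'⟩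
  have hPuj : IsProblem N {j} u :=
    ⟨hN, Finset.singleton_nonempty j, fun m hm => by
      rw [Finset.mem_singleton] at hm; rw [hm]; simpa [hu] using hx⟩
  have hLk : ∀ i ∈ N, I N {k} u i = dOf I N i k x' := by
    intro i hi
    rw [dOf, if_neg (by omega)]
    exact lemA hadd N k u (fun i' _ => x' i') hPuk
      (fun i' _ => by simp [hu, (Ne.symm hjk)]) i hi
  have hLj : ∀ i ∈ N, I N {j} u i = dOf I N i j x := by
    intro i hi
    rw [dOf, if_neg (by omega)]
    exact lemA hadd N j u (fun i' _ => x i') hPuj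
      (fun i' _ => by simp [hu]) i hi
  calc ∑ i ∈ N, dOf I N i j x = ∑ i ∈ N, I N {j} u i :=
        Finset.sum_congr rfl fun i hi => (hLj i hi).symm
    _ = ∑ i ∈ N, I N {k} u i := hkey.symm
    _ = ∑ i ∈ N, dOf I N i k x' := Finset.sum_congr rfl hLk

lemma decompOf {I : SIndex} (hadd : AdditiveIndex I) :
    Decomposes (dOf I) I := by
  intro N M
  induction M using Finset.strongInduction with
  | _ M ih =>
    intro t hP i hi
    obtain ⟨hN, hM, hcol⟩ := hP
    obtain ⟨j, hj⟩ := hM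
    by_cases he : M.erase j = ∅
    · have hMj : M = {j} := by
        rcases (Finset.erase_eq_empty_iff M j).mp he with h | h
        · exact absurd hj (by simp [h])
        · exact h
      subst hMj
      rw [Finset.sum_singleton]
      have hps : ∑ i' ∈ N, prof N t j i' = ∑ i' ∈ N, t i' j :=
        Finset.sum_congr rfl fun i' hi' => by simp [prof, hi']
      have hpos : 0 < ∑ i' ∈ N, t i' j := hcol j hj
      rw [dOf, if_neg (by omega)]
      exact lemA hadd N j t (fun i' _ => prof N t j i')
        ⟨hN, Finset.singleton_nonempty j, hcol⟩
        (fun i' hi' => by simp [prof, hi']) i hi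
    · have hje : M = {j} ∪ M.erase j := by
        rw [← Finset.insert_eq, Finset.insert_erase hj]
      have hdisj : Disjoint ({j} : Finset ℕ) (M.erase j) :=
        Finset.disjoint_singleton_left.mpr (Finset.notMem_erase j M)
      have hP1 : IsProblem N {j} t :=
        ⟨hN, Finset.singleton_nonempty j, fun m hm => by
          rw [Finset.mem_singleton] at hm; rw [hm]; exact hcol j hj⟩
      have hP2 : IsProblem N (M.erase j) t :=
        ⟨hN, Finset.nonempty_of_ne_empty he,
          fun m hm => hcol m (Finset.mem_of_mem_erase hm)⟩
      have h1 := hadd N M {j} (M.erase j) t t t ⟨hN, ⟨j, hj⟩, hcol⟩ hP1 hP2 hje hdisj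
        (fun _ _ _ _ => rfl) (fun _ _ _ _ => rfl) i hi
      have hsub1 : ({j} : Finset ℕ) ⊂ M := by
        rw [Finset.ssubset_iff_of_subset (Finset.singleton_subset_iff.mpr hj)]
        obtain ⟨m, hm⟩ := Finset.nonempty_of_ne_empty he
        exact ⟨m, Finset.mem_of_mem_erase hm, by
          simpa using (Finset.mem_erase.mp hm).1⟩
      have hsub2 : M.erase j ⊂ M := Finset.erase_ssubset hj
      rw [h1, ih {j} hsub1 t hP1 i hi, ih (M.erase j) hsub2 t hP2 i hi,
        ← Finset.sum_union hdisj, ← hje]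

/-- An index satisfies additivity, null artists, and equal global impact
of users if and only if it is an aggregate-invariant decomposable index. -/
theorem statement5 (I : SIndex) (hI : IsIndex I) :
    (AdditiveIndex I ∧ NullArtists I ∧ EqualGlobalImpact I) ↔
      ∃ d, IsDecompFn d ∧ AggregateInvariant d ∧ Decomposes d I := by
  constructor
  · rintro ⟨hadd, hnull, hegi⟩
    refine ⟨dOf I, ⟨?_, ?_⟩, ?_, decompOf hadd⟩
    · -- nonnegativity
      intro N i hi j x hpx
      rw [dOf]
      by_cases h : (∑ i' ∈ N, x i') = 0
      · rw [if_pos h]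
      · rw [if_neg h]
        have hP : IsProblem N {j} (fun i' _ => x i') :=
          ⟨⟨i, hi⟩, Finset.singleton_nonempty j, fun m _ => by simpa using Nat.pos_of_ne_zero h⟩
        exact (hI N {j} _ hP).1 i hi
    · -- null artists property of d
      intro N i hi j x hpx hxi
      rw [dOf]
      by_cases h : (∑ i' ∈ N, x i') = 0
      · rw [if_pos h]
      · rw [if_neg h]
        have hP : IsProblem N {j} (fun i' _ => x i') :=
          ⟨⟨i, hi⟩, Finset.singleton_nonempty j, fun m _ => by simpa using Nat.pos_of_ne_zero h⟩
        exact hnull N {j} _ hP i hi (by simpa using hxi)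
    · -- aggregate invariance
      rintro N j j' x x' hpx hpx' ⟨i0, hi0, hx0⟩ ⟨i0', hi0', hx0'⟩
      have hx : 0 < ∑ i ∈ N, x i :=
        Finset.sum_pos' (fun _ _ => Nat.zero_le _) ⟨i0, hi0, hx0⟩
      have hx' : 0 < ∑ i ∈ N, x' i :=
        Finset.sum_pos' (fun _ _ => Nat.zero_le _) ⟨i0', hi0', hx0'⟩
      have hk1 : j ≠ max j j' + 1 := by omega
      have hk2 : j' ≠ max j j' + 1 := by omega
      calc ∑ i ∈ N, dOf I N i j x
          = ∑ i ∈ N, dOf I N i (max j j' + 1) x' := pairLemma hadd hegi N hk1 x x' hx hx'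
        _ = ∑ i ∈ N, dOf I N i j' x' :=
            (pairLemma hadd hegi N hk2 x' x' hx' hx').symm
  · rintro ⟨d, ⟨hd0, hdz⟩, hAI, hdec⟩
    have hpadprof : ∀ N (t : ℕ → ℕ → ℕ) j, PadVec N (prof N t j) :=
      fun N t j i hi => if_neg hi
    refine ⟨?_, ?_, ?_⟩
    · -- additivity
      intro N M M₁ M₂ t t₁ t₂ hP hP1 hP2 hMsplit hdisj hag1 hag2 i hi
      rw [hdec N M t hP i hi, hdec N M₁ t₁ hP1 i hi, hdec N M₂ t₂ hP2 i hi,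
        hMsplit, Finset.sum_union hdisj]
      congr 1
      · refine Finset.sum_congr rfl fun j hj => ?_
        congr 1
        funext i'
        by_cases hi' : i' ∈ N
        · simp [prof, hi', hag1 i' hi' j hj]
        · simp [prof, hi']
      · refine Finset.sum_congr rfl fun j hj => ?_
        congr 1
        funext i'
        by_cases hi' : i' ∈ N
        · simp [prof, hi', hag2 i' hi' j hj]
        · simp [prof, hi']
    · -- null artists
      intro N M t hP i hi hT
      rw [hdec N M t hP i hi]
      refine Finset.sum_eq_zero fun j hj => ?_
      have htij : t i j = 0 := by
        have := (Finset.sum_eq_zero_iff).mp hT j hj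
        omega
      exact hdz N i hi j (prof N t j) (hpadprof N t j) (by simp [prof, hi, htij])
    · -- equal global impact
      intro N M t hP hcard j hj j' hj'
      have hnz : ∀ k ∈ M, ∃ i ∈ N, 0 < prof N t k i := by
        intro k hk
        by_contra h
        push_neg at h
        have hz : ∑ i ∈ N, t i k = 0 := Finset.sum_eq_zero fun i hi => by
          have := h i hi
          simpa [prof, hi] using this
        have := hP.2.2 k hk
        omega
      set c : ℝ := ∑ i ∈ N, d N i j (prof N t j) with hc
      have hconst : ∀ k ∈ M, ∑ i ∈ N, d N i k (prof N t k) = c :=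
        fun k hk => hAI N k j (prof N t k) (prof N t j) (hpadprof N t k)
          (hpadprof N t j) (hnz k hk) (hnz j hj)
      have hkey : ∀ m ∈ M, ∑ i ∈ N, I N (M.erase m) t i = ((M.card - 1 : ℕ) : ℝ) * c := by
        intro m hm
        have hPm : IsProblem N (M.erase m) t := by
          refine ⟨hP.1, ?_, fun k hk => hP.2.2 k (Finset.mem_of_mem_erase hk)⟩
          rw [← Finset.card_pos, Finset.card_erase_of_mem hm]
          omega
        calc ∑ i ∈ N, I N (M.erase m) t i
            = ∑ i ∈ N, ∑ k ∈ M.erase m, d N i k (prof N t k) :=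
              Finset.sum_congr rfl fun i hi => hdec N (M.erase m) t hPm i hi
          _ = ∑ k ∈ M.erase m, ∑ i ∈ N, d N i k (prof N t k) := Finset.sum_comm
          _ = ∑ _k ∈ M.erase m, c :=
              Finset.sum_congr rfl fun k hk =>
                hconst k (Finset.mem_of_mem_erase hk)
          _ = ((M.erase m).card : ℝ) * c := by
              rw [Finset.sum_const, nsmul_eq_mul]
          _ = ((M.card - 1 : ℕ) : ℝ) * c := by
              rw [Finset.card_erase_of_mem hm]
      rw [hkey j hj, hkey j' hj']
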